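/- Let 0 ≤ σ₂ < σ₁ and suppose that the regular solutions satisfy v_{σ₁}(ζ) > 0 and v_{σ₂}(ζ) > 0 for all ζ ≥ 0. Then v_{σ₁}(ζ) < v_{σ₂}(ζ) for every ζ > 0. -/

import Mathlib

/-!
With `α = 1/(m-2)` the equation reads `-(ζ^α v')' + ζ^(α-1) b v = σ ζ^(α-1) v`, so the
weighted Wronskian `W = ζ^α (v₁' v₂ - v₁ v₂')` satisfies `W' = (σ₂ - σ₁) ζ^(α-1) v₁ v₂ < 0`,
the potential `b` cancelling out. Since `α > 0` and the solutions are `C¹` up to `0`, `W(0) = 0`,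
hence `W < 0` on `(0,∞)`. This is the sign of `(v₁/v₂)'`, so `v₁/v₂` decreases strictly from
its value `1` at `0`.
-/
open Filter Set

/-- A regular solution of the singular ODE
`-ζ·v'' - v'/(m-2) + B·ζ^{m/(m-2)}·v = σ·v` on `(0,∞)`:
continuously differentiable on `[0,∞)`, twice continuously differentiable on
`(0,∞)`, and normalized by `v 0 = 1`. -/
def RegSol (m B σ : ℝ) (v : ℝ → ℝ) : Prop :=
  ContDiffOn ℝ 1 v (Set.Ici 0) ∧
  ContDiffOn ℝ 2 v (Set.Ioi 0) ∧
  (∀ ζ : ℝ, 0 < ζ →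
    -ζ * deriv (deriv v) ζ - deriv v ζ / (m - 2)
      + B * ζ ^ (m / (m - 2)) * v ζ = σ * v ζ) ∧
  v 0 = 1

theorem strictAntiOn_div_of_deriv_mul_sub_mul_deriv_neg {D : Set ℝ} (hD : Convex ℝ D)
    {f g f' g' : ℝ → ℝ} (hf : ContinuousOn f D) (hg : ContinuousOn g D)
    (hg₀ : ∀ x ∈ D, g x ≠ 0)
    (hf' : ∀ x ∈ interior D, HasDerivAt f (f' x) x)
    (hg' : ∀ x ∈ interior D, HasDerivAt g (g' x) x)
    (hW : ∀ x ∈ interior D, f' x * g x - f x * g' x < 0) :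
    StrictAntiOn (fun x => f x / g x) D := by
  refine strictAntiOn_of_deriv_neg hD (hf.div hg hg₀) fun x hx => ?_
  rw [show (fun x => f x / g x) = f / g from rfl,
    ((hf' x hx).div (hg' x hx) (hg₀ x (interior_subset hx))).deriv]
  exact div_neg_of_neg_of_pos (hW x hx) (sq_pos_of_ne_zero (hg₀ x (interior_subset hx)))

/-- The one-sided derivative `derivWithin · (Ici 0)` keeps `W` continuous at `ζ = 0`. -/
noncomputable def weightedWronskian (α : ℝ) (v₁ v₂ : ℝ → ℝ) (ζ : ℝ) : ℝ :=
  ζ ^ α * (derivWithin v₁ (Ici 0) ζ * v₂ ζ - v₁ ζ * derivWithin v₂ (Ici 0) ζ)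

theorem weightedWronskian_zero {α : ℝ} (hα : 0 < α) (v₁ v₂ : ℝ → ℝ) :
    weightedWronskian α v₁ v₂ 0 = 0 := by
  simp [weightedWronskian, Real.zero_rpow hα.ne']

theorem weightedWronskian_of_pos {α : ℝ} (v₁ v₂ : ℝ → ℝ) {ζ : ℝ} (hζ : 0 < ζ) :
    weightedWronskian α v₁ v₂ ζ =
      ζ ^ α * (deriv v₁ ζ * v₂ ζ - v₁ ζ * deriv v₂ ζ) := by
  simp only [weightedWronskian, derivWithin_of_mem_nhds (Ici_mem_nhds hζ)]

namespace RegSol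

variable {m B σ σ₁ σ₂ : ℝ} {v v₁ v₂ : ℝ → ℝ}

theorem hasDerivAt (h : RegSol m B σ v) {ζ : ℝ} (hζ : 0 < ζ) :
    HasDerivAt v (deriv v ζ) ζ :=
  ((h.2.1.differentiableOn two_ne_zero).differentiableAt (Ioi_mem_nhds hζ)).hasDerivAt

theorem hasDerivAt_deriv (h : RegSol m B σ v) {ζ : ℝ} (hζ : 0 < ζ) :
    HasDerivAt (deriv v) (deriv (deriv v) ζ) ζ :=
  (((h.2.1.deriv_of_isOpen isOpen_Ioi le_rfl).differentiableOn one_ne_zero).differentiableAt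
    (Ioi_mem_nhds hζ)).hasDerivAt

theorem continuousOn (h : RegSol m B σ v) : ContinuousOn v (Ici 0) :=
  h.1.continuousOn

theorem continuousOn_weightedWronskian {α : ℝ} (hα : 0 ≤ α)
    (h₁ : RegSol m B σ₁ v₁) (h₂ : RegSol m B σ₂ v₂) :
    ContinuousOn (weightedWronskian α v₁ v₂) (Ici 0) := by
  have hd₁ := h₁.1.continuousOn_derivWithin (uniqueDiffOn_Ici 0) le_rfl
  have hd₂ := h₂.1.continuousOn_derivWithin (uniqueDiffOn_Ici 0) le_rfl
  exact (continuousOn_id.rpow_const fun _ _ => Or.inr hα).mul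
    ((hd₁.mul h₂.continuousOn).sub (h₁.continuousOn.mul hd₂))

theorem hasDerivAt_weightedWronskian (h₁ : RegSol m B σ₁ v₁) (h₂ : RegSol m B σ₂ v₂)
    {ζ : ℝ} (hζ : 0 < ζ) :
    HasDerivAt (weightedWronskian (m - 2)⁻¹ v₁ v₂)
      (ζ ^ ((m - 2)⁻¹ - 1) * ((σ₂ - σ₁) * (v₁ ζ * v₂ ζ))) ζ := by
  set α := (m - 2)⁻¹
  have hW : weightedWronskian α v₁ v₂ =ᶠ[nhds ζ]
      fun x => x ^ α * (deriv v₁ x * v₂ x - v₁ x * deriv v₂ x) := by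
    filter_upwards [Ioi_mem_nhds hζ] with x hx
    exact weightedWronskian_of_pos v₁ v₂ hx
  have hprod := (Real.hasDerivAt_rpow_const (p := α) (Or.inl hζ.ne')).mul
    (((h₁.hasDerivAt_deriv hζ).mul (h₂.hasDerivAt hζ)).sub
      ((h₁.hasDerivAt hζ).mul (h₂.hasDerivAt_deriv hζ)))
  refine (hprod.congr_deriv ?_).congr_of_eventuallyEq hW
  have hsplit : ζ ^ α = ζ ^ (α - 1) * ζ := by
    rw [Real.rpow_sub_one hζ.ne']
    field_simp
  simp only [Pi.sub_apply, Pi.mul_apply]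
  rw [hsplit]
  linear_combination
    (-(ζ ^ (α - 1) * v₂ ζ)) * h₁.2.2.1 ζ hζ + (ζ ^ (α - 1) * v₁ ζ) * h₂.2.2.1 ζ hζ

theorem deriv_mul_sub_mul_deriv_neg (hm : 2 < m) (hσ : σ₂ < σ₁)
    (h₁ : RegSol m B σ₁ v₁) (h₂ : RegSol m B σ₂ v₂)
    (hp₁ : ∀ ζ, 0 < ζ → 0 < v₁ ζ) (hp₂ : ∀ ζ, 0 < ζ → 0 < v₂ ζ) {ζ : ℝ} (hζ : 0 < ζ) :
    deriv v₁ ζ * v₂ ζ - v₁ ζ * deriv v₂ ζ < 0 := by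
  have hα : 0 < (m - 2)⁻¹ := inv_pos.mpr (by linarith)
  have hanti : StrictAntiOn (weightedWronskian (m - 2)⁻¹ v₁ v₂) (Ici 0) := by
    refine strictAntiOn_of_deriv_neg (convex_Ici 0)
      (continuousOn_weightedWronskian hα.le h₁ h₂) fun x hx => ?_
    rw [interior_Ici] at hx
    rw [(hasDerivAt_weightedWronskian h₁ h₂ hx).deriv]
    exact mul_neg_of_pos_of_neg (Real.rpow_pos_of_pos hx _)
      (mul_neg_of_neg_of_pos (sub_neg.mpr hσ) (mul_pos (hp₁ x hx) (hp₂ x hx)))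
  have hW := hanti self_mem_Ici hζ.le hζ
  rw [weightedWronskian_zero hα, weightedWronskian_of_pos v₁ v₂ hζ] at hW
  exact neg_of_mul_neg_right hW (Real.rpow_pos_of_pos hζ _).le

end RegSol

theorem stmt11_general (m B σ₁ σ₂ : ℝ) (hm : 3 < m)
    (hσ : σ₂ < σ₁) (v₁ v₂ : ℝ → ℝ)
    (h₁ : RegSol m B σ₁ v₁) (h₂ : RegSol m B σ₂ v₂)
    (hp₁ : ∀ ζ : ℝ, 0 ≤ ζ → 0 < v₁ ζ) (hp₂ : ∀ ζ : ℝ, 0 ≤ ζ → 0 < v₂ ζ) :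
    ∀ ζ : ℝ, 0 < ζ → v₁ ζ < v₂ ζ := by
  intro ζ hζ
  have hratio : StrictAntiOn (fun x => v₁ x / v₂ x) (Ici 0) := by
    refine strictAntiOn_div_of_deriv_mul_sub_mul_deriv_neg (convex_Ici 0)
      h₁.continuousOn h₂.continuousOn (fun x hx => (hp₂ x hx).ne')
      (fun x hx => h₁.hasDerivAt (by simpa using hx))
      (fun x hx => h₂.hasDerivAt (by simpa using hx)) fun x hx => ?_
    rw [interior_Ici] at hx
    exact h₁.deriv_mul_sub_mul_deriv_neg (by linarith) hσ h₂
      (fun y hy => hp₁ y hy.le) (fun y hy => hp₂ y hy.le) hx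
  have hlt := hratio self_mem_Ici hζ.le hζ
  simp only [h₁.2.2.2, h₂.2.2.2, div_one] at hlt
  exact (div_lt_one (hp₂ ζ hζ.le)).mp hlt

theorem stmt11 (m B σ₁ σ₂ : ℝ) (hm : 3 < m) (hB : 0 < B)
    (hσ₂ : 0 ≤ σ₂) (hσ : σ₂ < σ₁) (v₁ v₂ : ℝ → ℝ)
    (h₁ : RegSol m B σ₁ v₁) (h₂ : RegSol m B σ₂ v₂)
    (hp₁ : ∀ ζ : ℝ, 0 ≤ ζ → 0 < v₁ ζ) (hp₂ : ∀ ζ : ℝ, 0 ≤ ζ → 0 < v₂ ζ) :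
    ∀ ζ : ℝ, 0 < ζ → v₁ ζ < v₂ ζ :=
  stmt11_general m B σ₁ σ₂ hm hσ v₁ v₂ h₁ h₂ hp₁ hp₂
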